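/- arXiv:0809.0502 — 3 statements merged into one kernel-verified Lean document; each statement's English description precedes it below -/
import Mathlib

section
/- The element a_3^2 + 2a_2a_4 is invariant: η_R(a_3^2 + 2a_2a_4) = a_3^2 + 2a_2a_4 in Ā[r]. -/
/-!
`Abar = 𝔽_5[a_2,a_3,a_4]` (the variable `0,1,2 : Fin 3` are `a_2, a_3, a_4`),
`q(t) = t^5 + a_2t^3 + a_3t^2 + a_4t`, and `etaR : Abar → Abar[r]` is the
𝔽_5-algebra map sending `a_i` to the coefficient of `x^{5-i}` in `q(x+r) - q(r)`,
computed in `Abar[r][x]`.  This is the reduction modulo `(5, a_1, a_5)` of the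
Gorbounov–Hopkins–Mahowald Hopf algebroid at the prime `5`.
-/

/-- The ring `Ā = 𝔽_5[a_2,a_3,a_4]`. -/
abbrev Abar : Type := MvPolynomial (Fin 3) (ZMod 5)

/-- The generator `a_2`. -/
noncomputable def a2 : Abar := MvPolynomial.X 0
/-- The generator `a_3`. -/
noncomputable def a3 : Abar := MvPolynomial.X 1
/-- The generator `a_4`. -/
noncomputable def a4 : Abar := MvPolynomial.X 2

/-- The polynomial `q(t) = t^5 + a_2t^3 + a_3t^2 + a_4t` as an element of `Ā[t]`. -/
noncomputable def q : Polynomial Abar :=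
  Polynomial.X ^ 5 + Polynomial.C a2 * Polynomial.X ^ 3 + Polynomial.C a3 * Polynomial.X ^ 2 +
    Polynomial.C a4 * Polynomial.X

/-- `q(x+r) - q(r)`, an element of `Ā[r][x]` (the inner variable is `r`, the outer is `x`). -/
noncomputable def qShift : Polynomial (Polynomial Abar) :=
  Polynomial.eval₂ (Polynomial.C.comp Polynomial.C)
      (Polynomial.X + Polynomial.C Polynomial.X) q -
    Polynomial.eval₂ (Polynomial.C.comp Polynomial.C) (Polynomial.C Polynomial.X) q

/-- The right unit `η_R : Ā → Ā[r]`, sending `a_i` (for `i = 2,3,4`) to the coefficient of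
`x^{5-i}` in `q(x+r) - q(r)`. -/
noncomputable def etaR : Abar →ₐ[ZMod 5] Polynomial Abar :=
  MvPolynomial.aeval (fun k : Fin 3 => qShift.coeff (3 - k.1))

/-!
In characteristic `5` the Frobenius `t ↦ t ^ 5` is additive, so
`q(x + r) - q(r) = x^5 + a_2x^3 + (a_3 + 3a_2r)x^2 + (a_4 + 2a_3r + 3a_2r^2)x`.
Hence `η_R(a_3^2 + 2a_2a_4) = a_3^2 + 2a_2a_4 + 10a_2a_3r + 15a_2^2r^2`, and the extra terms vanish
modulo `5`.
-/

open Polynomial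

section CharFive

variable {R : Type*} [CommRing R] [CharP R 5]

theorem quintic_shift_sub_eq_of_charP_five (a b c r x : R) :
    ((x + r) ^ 5 + a * (x + r) ^ 3 + b * (x + r) ^ 2 + c * (x + r)) -
        (r ^ 5 + a * r ^ 3 + b * r ^ 2 + c * r) =
      x ^ 5 + a * x ^ 3 + (b + 3 * a * r) * x ^ 2 + (c + 2 * b * r + 3 * a * r ^ 2) * x := by
  have : Fact (Nat.Prime 5) := ⟨Nat.prime_five⟩
  rw [add_pow_char]
  ring

theorem sq_add_two_mul_shift_eq_of_charP_five (a b c r : R) :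
    (b + 3 * a * r) ^ 2 + 2 * a * (c + 2 * b * r + 3 * a * r ^ 2) = b ^ 2 + 2 * a * c := by
  have h5 : (5 : R) = 0 := by exact_mod_cast CharP.cast_eq_zero R 5
  linear_combination (2 * a * b * r + 3 * a ^ 2 * r ^ 2) * h5

end CharFive

theorem eval₂_depressed_quintic {A S : Type*} [Semiring A] [Semiring S] (f : A →+* S)
    (y : S) (a b c : A) :
    eval₂ f y (X ^ 5 + C a * X ^ 3 + C b * X ^ 2 + C c * X) =
      y ^ 5 + f a * y ^ 3 + f b * y ^ 2 + f c * y := by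
  simp only [eval₂_add, C_mul_X_pow_eq_monomial, C_mul_X_eq_monomial, eval₂_monomial, eval₂_X_pow,
    pow_one]

theorem qShift_eq :
    qShift = X ^ 5 + C (C a2) * X ^ 3 + C (C a3 + 3 * C a2 * X) * X ^ 2 +
      C (C a4 + 2 * C a3 * X + 3 * C a2 * X ^ 2) * X := by
  rw [qShift, q, eval₂_depressed_quintic, eval₂_depressed_quintic]
  -- `rw` cannot match here: the ring structure on `Abar` is found through `AddMonoidAlgebra`,
  -- so the general lemma is applied up to defeq instead.
  refine (quintic_shift_sub_eq_of_charP_five (R := Abar[X][X]) _ _ _ _ _).trans ?_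
  simp only [RingHom.comp_apply, map_add, map_mul, map_pow, map_ofNat]

theorem etaR_X (k : Fin 3) : etaR (MvPolynomial.X k) = qShift.coeff (3 - k) :=
  MvPolynomial.aeval_X _ _

theorem etaR_a2 : etaR a2 = C a2 := by
  simp only [a2, etaR_X, qShift_eq, coeff_add, coeff_C_mul_X_pow, coeff_C_mul_X]
  norm_num

theorem etaR_a3 : etaR a3 = C a3 + 3 * C a2 * X := by
  simp only [a3, etaR_X, qShift_eq, coeff_add, coeff_C_mul_X_pow, coeff_C_mul_X]
  norm_num

theorem etaR_a4 : etaR a4 = C a4 + 2 * C a3 * X + 3 * C a2 * X ^ 2 := by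
  simp only [a4, etaR_X, qShift_eq, coeff_add, coeff_C_mul_X_pow, coeff_C_mul_X]
  norm_num

/-- The element `a_3² + 2a_2a_4` is invariant: `η_R(a_3² + 2a_2a_4) = a_3² + 2a_2a_4`. -/
theorem a32_invariant :
    etaR (a3 ^ 2 + 2 * a2 * a4) = Polynomial.C (a3 ^ 2 + 2 * a2 * a4) := by
  rw [map_add, map_mul, map_mul, map_pow, map_ofNat, etaR_a2, etaR_a3, etaR_a4]
  refine (sq_add_two_mul_shift_eq_of_charP_five (R := Abar[X]) _ _ _ _).trans ?_
  simp only [map_add, map_mul, map_pow, map_ofNat]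
end

section
/- In the quotient ring Γ̄ = Ā[r]/(q(r)), the image of η_R(a_3^5 + 2a_2^3a_3^3 + a_2^4a_3a_4) equals the image of a_3^5 + 2a_2^3a_3^3 + a_2^4a_3a_4; i.e. the element a_3^5 + 2a_2^3a_3^3 + a_2^4a_3a_4 is invariant modulo the relation q(r) = 0. -/
/-! In characteristic 5 the Frobenius identity `(x + r)^5 = x^5 + r^5` makes `q(x + r) - q(r)`
equal to `x^5 + a₂x^3 + (a₃ + 3a₂r)x^2 + (a₄ + 2a₃r + 3a₂r^2)x`, so `η_R` fixes `a₂` and shifts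
`a₃, a₄` by the displayed multiples of `r`. Applying Frobenius once more to `η_R(a₃)^5`, the
difference `η_R(f) - f` for `f = a₃^5 + 2a₂^3a₃^3 + a₂^4a₃a₄` collapses to `3a₂^5 q(r)`. -/

open Polynomial

section CharFive

variable {R : Type*} [CommRing R] [CharP R 5]

theorem add_pow_five_of_charP (x y : R) : (x + y) ^ 5 = x ^ 5 + y ^ 5 :=
  haveI : Fact (Nat.Prime 5) := ⟨by norm_num⟩
  add_pow_char x y 5

theorem quintic_add_sub_of_charP (b c d x r : R) :
    (x + r) ^ 5 + b * (x + r) ^ 3 + c * (x + r) ^ 2 + d * (x + r)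
        - (r ^ 5 + b * r ^ 3 + c * r ^ 2 + d * r)
      = x ^ 5 + b * x ^ 3 + (c + 3 * b * r) * x ^ 2 + (d + 2 * c * r + 3 * b * r ^ 2) * x := by
  linear_combination add_pow_five_of_charP x r

theorem a35_shift_sub_of_charP (a₂ a₃ a₄ r : R) :
    (a₃ + 3 * a₂ * r) ^ 5 + 2 * a₂ ^ 3 * (a₃ + 3 * a₂ * r) ^ 3
        + a₂ ^ 4 * (a₃ + 3 * a₂ * r) * (a₄ + 2 * a₃ * r + 3 * a₂ * r ^ 2)
      - (a₃ ^ 5 + 2 * a₂ ^ 3 * a₃ ^ 3 + a₂ ^ 4 * a₃ * a₄)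
      = 3 * a₂ ^ 5 * (r ^ 5 + a₂ * r ^ 3 + a₃ * r ^ 2 + a₄ * r) := by
  have five_eq_zero : (5 : R) = 0 := by exact_mod_cast CharP.cast_eq_zero R 5
  linear_combination add_pow_five_of_charP a₃ (3 * a₂ * r)
    + (4 * a₂ ^ 4 * a₃ ^ 2 * r + 12 * a₂ ^ 5 * a₃ * r ^ 2 + 12 * a₂ ^ 6 * r ^ 3
      + 48 * a₂ ^ 5 * r ^ 5) * five_eq_zero

end CharFive

/-- In `Γ̄ = Ā[r]/(q(r))`, the image of `η_R(a_3^5 + 2a_2^3a_3^3 + a_2^4a_3a_4)` equals the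
image of `a_3^5 + 2a_2^3a_3^3 + a_2^4a_3a_4` (here `q = q(r) ∈ Ā[r]`). -/
theorem a35_invariant_mod_q :
    Ideal.Quotient.mk (Ideal.span {q}) (etaR (a3 ^ 5 + 2 * a2 ^ 3 * a3 ^ 3 + a2 ^ 4 * a3 * a4)) =
      Ideal.Quotient.mk (Ideal.span {q})
        (Polynomial.C (a3 ^ 5 + 2 * a2 ^ 3 * a3 ^ 3 + a2 ^ 4 * a3 * a4)) := by
  rw [Ideal.Quotient.eq, Ideal.mem_span_singleton]
  refine ⟨3 * C a2 ^ 5, ?_⟩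
  simp only [map_add, map_mul, map_pow, map_ofNat, etaR_a2, etaR_a3, etaR_a4, q]
  linear_combination a35_shift_sub_of_charP (C a2) (C a3) (C a4) (X : Abar[X])
end

section
/- For f = a_4^2r + 2a_3a_4r^2 + 3a_3^2r^3 + 2a_2a_4r^3 + 3a_2a_3r^4 ∈ Ā[r], the identity d(f) = −a_2^2·b holds in Ā[r_1,r_2], where b = r_1^4r_2 + 2r_1^3r_2^2 + 2r_1^2r_2^3 + r_1r_2^4. -/
/-- The cobar differential: for `f = ∑_k c_k r^k`, `d(f) = ∑_k η_R(c_k)[r:=r_1]·r_2^k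
− f[r:=r_1+r_2] + f[r:=r_1]`, an element of `Ā[r_1][r_2]` (the inner variable is `r_1`,
the outer is `r_2`). -/
noncomputable def cobarD (f : Polynomial Abar) : Polynomial (Polynomial Abar) :=
  (∑ k ∈ Finset.range (f.natDegree + 1),
      Polynomial.C (etaR (f.coeff k)) * Polynomial.X ^ k) -
    Polynomial.eval₂ (Polynomial.C.comp Polynomial.C)
      (Polynomial.C Polynomial.X + Polynomial.X) f +
    Polynomial.C f

/-- The class `b = r_1^4r_2 + 2r_1^3r_2^2 + 2r_1^2r_2^3 + r_1r_2^4`, the mod-5 reduction of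
`((r_1+r_2)^5 − r_1^5 − r_2^5)/5`. -/
noncomputable def bclass : Polynomial (Polynomial Abar) :=
  Polynomial.C (Polynomial.X ^ 4) * Polynomial.X +
    2 * Polynomial.C (Polynomial.X ^ 3) * Polynomial.X ^ 2 +
    2 * Polynomial.C (Polynomial.X ^ 2) * Polynomial.X ^ 3 +
    Polynomial.C Polynomial.X * Polynomial.X ^ 4

/-!
In characteristic `5` the Frobenius identity `(x + r)⁵ = x⁵ + r⁵` makes `q(x + r) - q(r)` again a
quintic of the same shape in `x`, with coefficients `a₂`, `a₃ + 3a₂r`, `a₄ + 2a₃r + 3a₂r²`; these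
are the values of `η_R`. Writing `f = x₂(a₂, a₃, a₄; r)`, the differential `d(f)` becomes
`x₂(η_R(a); r₂) - x₂(a; r₁ + r₂) + x₂(a; r₁)`, and its equality with `-a₂²b` is a polynomial
identity valid in every commutative ring of characteristic `5`.
-/

open Polynomial

section CharFive

variable {R : Type*} [CommRing R]

def quintic (a₂ a₃ a₄ t : R) : R := t ^ 5 + a₂ * t ^ 3 + a₃ * t ^ 2 + a₄ * t

def x2Cochain (a₂ a₃ a₄ t : R) : R :=
  a₄ ^ 2 * t + 2 * (a₃ * a₄) * t ^ 2 + 3 * a₃ ^ 2 * t ^ 3 + 2 * (a₂ * a₄) * t ^ 3 +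
    3 * (a₂ * a₃) * t ^ 4

variable [CharP R 5]

theorem quintic_add_sub (a₂ a₃ a₄ x r : R) :
    quintic a₂ a₃ a₄ (x + r) - quintic a₂ a₃ a₄ r =
      quintic a₂ (a₃ + 3 * a₂ * r) (a₄ + 2 * a₃ * r + 3 * a₂ * r ^ 2) x := by
  have : Fact (Nat.Prime 5) := ⟨by norm_num⟩
  simp only [quintic, add_pow_char]
  ring

theorem x2Cochain_cobar (a₂ a₃ a₄ r₁ r₂ : R) :
    x2Cochain a₂ (a₃ + 3 * a₂ * r₁) (a₄ + 2 * a₃ * r₁ + 3 * a₂ * r₁ ^ 2) r₂ -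
        x2Cochain a₂ a₃ a₄ (r₁ + r₂) + x2Cochain a₂ a₃ a₄ r₁ =
      -a₂ ^ 2 * (r₁ ^ 4 * r₂ + 2 * r₁ ^ 3 * r₂ ^ 2 + 2 * r₁ ^ 2 * r₂ ^ 3 + r₁ * r₂ ^ 4) := by
  rw [← sub_eq_zero]
  unfold x2Cochain
  ring_nf
  reduce_mod_char!

end CharFive

theorem cobarD_eq_map_sub_eval₂_add_C (f : Abar[X]) :
    cobarD f = f.map (etaR : Abar →+* Abar[X]) - f.eval₂ (C.comp C) (C X + X) + C f := by
  rw [cobarD, as_sum_range_C_mul_X_pow' (f.map _) (Nat.lt_succ_of_le natDegree_map_le)]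
  simp only [coeff_map]
  rfl

/-- For `f = a_4²r + 2a_3a_4r² + 3a_3²r³ + 2a_2a_4r³ + 3a_2a_3r⁴`, one has `d(f) = −a_2²·b`. -/
theorem d2_x2 :
    cobarD
        (Polynomial.C (a4 ^ 2) * Polynomial.X + 2 * Polynomial.C (a3 * a4) * Polynomial.X ^ 2 +
          3 * Polynomial.C (a3 ^ 2) * Polynomial.X ^ 3 +
          2 * Polynomial.C (a2 * a4) * Polynomial.X ^ 3 +
          3 * Polynomial.C (a2 * a3) * Polynomial.X ^ 4) =
      -Polynomial.C (Polynomial.C (a2 ^ 2)) * bclass := by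
  rw [cobarD_eq_map_sub_eval₂_add_C]
  simp only [Polynomial.map_add, Polynomial.map_mul, Polynomial.map_pow, Polynomial.map_ofNat,
    map_C, map_X, eval₂_add, eval₂_mul (S := Abar[X][X]), eval₂_pow (S := Abar[X][X]), eval₂_X,
    eval₂_C, eval₂_ofNat, RingHom.coe_comp, Function.comp_apply, RingHom.coe_coe, map_add,
    map_mul, map_pow, map_ofNat, etaR_a2, etaR_a3, etaR_a4, bclass]
  exact x2Cochain_cobar (C (C a2)) (C (C a3)) (C (C a4)) (C X) X
end
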